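/- arXiv:2305.13170 — 3 statements merged into one kernel-verified Lean document; each statement's English description precedes it below -/
import Mathlib

section
/- Suppose f_i = (1/m) Σ_{j=1}^m f_{i,j} where each f_{i,j} is convex and L-smooth, and g is obtained by sampling j uniformly at random and setting g = ∇f_{i,j}(x). Then for any fixed point x⋆, E[‖g - ∇f_i(x⋆)‖²] ≤ 4L·D_{f_i}(x, x⋆) + C, where C = (2/m) Σ_j ‖∇f_{i,j}(x⋆)‖² - 2‖∇f_i(x⋆)‖². -/
/-! Co-coercivity of the gradient of a convex `L`-smooth `f`,
`‖∇f x - ∇f y‖² ≤ 2L D_f(x, y)`, follows by applying the descent lemma at `x` with step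
`(∇f x - ∇f y) / L` and the first-order convexity inequality at `y` to the same point.
Splitting `∇f_j(x) - ∇f_i(x⋆)` through `∇f_j(x⋆)` and using `‖u + v‖² ≤ 2‖u‖² + 2‖v‖²` bounds
each term by `4L D_{f_j}(x, x⋆) + 2‖∇f_j(x⋆) - ∇f_i(x⋆)‖²`. Averaging over `j`, the Bregman
divergences average to `D_{f_i}(x, x⋆)` and the second terms to twice the variance
`(1/m) Σ_j ‖∇f_j(x⋆)‖² - ‖∇f_i(x⋆)‖²`. -/

open RealInnerProductSpace Finset

theorem le_add_deriv_add_of_deriv_le_add_mul {φ φ' : ℝ → ℝ} {K : ℝ}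
    (hφ : ∀ t, HasDerivAt φ (φ' t) t) (hK : ∀ t ∈ Set.Ioo (0 : ℝ) 1, φ' t ≤ φ' 0 + K * t) :
    φ 1 ≤ φ 0 + φ' 0 + K / 2 := by
  set ψ : ℝ → ℝ := fun t => φ t - t * φ' 0 - K / 2 * t ^ 2
  have hψ : ∀ t, HasDerivAt ψ (φ' t - φ' 0 - K * t) t := fun t => by
    refine (((hφ t).fun_sub ((hasDerivAt_id' t).mul_const (φ' 0))).fun_sub
      ((hasDerivAt_pow 2 t).const_mul (K / 2))).congr_deriv ?_
    push_cast
    ring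
  have hanti : AntitoneOn ψ (Set.Icc 0 1) := by
    refine antitoneOn_of_deriv_nonpos (convex_Icc 0 1)
      (fun t _ => (hψ t).continuousAt.continuousWithinAt)
      (fun t _ => (hψ t).differentiableAt.differentiableWithinAt) fun t ht => ?_
    rw [interior_Icc] at ht
    rw [(hψ t).deriv]
    linarith [hK t ht]
  have h01 := hanti (Set.left_mem_Icc.2 zero_le_one) (Set.right_mem_Icc.2 zero_le_one) zero_le_one
  simp only [ψ] at h01
  linarith

theorem norm_add_sq_le_two_mul {G : Type*} [SeminormedAddGroup G] (u v : G) :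
    ‖u + v‖ ^ 2 ≤ 2 * (‖u‖ ^ 2 + ‖v‖ ^ 2) :=
  (pow_le_pow_left₀ (norm_nonneg _) (norm_add_le u v) 2).trans add_sq_le

section
variable {E : Type*} [NormedAddCommGroup E] [InnerProductSpace ℝ E]

theorem Finset.inv_card_mul_sum_norm_sub_average_sq {ι : Type*} (s : Finset ι) (a : ι → E) :
    (#s : ℝ)⁻¹ * ∑ i ∈ s, ‖a i - (#s : ℝ)⁻¹ • ∑ j ∈ s, a j‖ ^ 2 =
      (#s : ℝ)⁻¹ * ∑ i ∈ s, ‖a i‖ ^ 2 - ‖(#s : ℝ)⁻¹ • ∑ j ∈ s, a j‖ ^ 2 := by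
  rcases s.eq_empty_or_nonempty with rfl | hs
  · simp
  set c := (#s : ℝ)⁻¹ • ∑ j ∈ s, a j
  have hcard : (#s : ℝ) ≠ 0 := by exact_mod_cast hs.card_pos.ne'
  have hsum : ∑ j ∈ s, a j = (#s : ℝ) • c := by rw [smul_inv_smul₀ hcard]
  simp only [norm_sub_sq_real, sum_add_distrib, sum_sub_distrib, ← mul_sum,
    ← sum_inner, hsum, real_inner_smul_left, real_inner_self_eq_norm_sq, sum_const,
    nsmul_eq_mul]
  field_simp
  ring

variable [CompleteSpace E]

noncomputable def bregmanDiv (f : E → ℝ) (x y : E) : ℝ := f x - f y - ⟪gradient f y, x - y⟫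

theorem HasGradientAt.const_mul_fun_sum {ι : Type*} (s : Finset ι) (w : ℝ) {F : ι → E → ℝ}
    {G : ι → E} {x : E} (hF : ∀ j ∈ s, HasGradientAt (F j) (G j) x) :
    HasGradientAt (fun z => w * ∑ j ∈ s, F j z) (w • ∑ j ∈ s, G j) x := by
  have hsum := HasFDerivAt.fun_sum fun j hj => (hF j hj).hasFDerivAt
  rw [hasGradientAt_iff_hasFDerivAt, map_smul, map_sum]
  simpa only [smul_eq_mul] using hsum.const_mul w

theorem gradient_const_mul_fun_sum {ι : Type*} (s : Finset ι) (w : ℝ) {F : ι → E → ℝ}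
    (hF : ∀ j ∈ s, Differentiable ℝ (F j)) (x : E) :
    gradient (fun z => w * ∑ j ∈ s, F j z) x = w • ∑ j ∈ s, gradient (F j) x :=
  (HasGradientAt.const_mul_fun_sum s w fun j hj => (hF j hj x).hasGradientAt).gradient

theorem bregmanDiv_const_mul_fun_sum {ι : Type*} (s : Finset ι) (w : ℝ) {F : ι → E → ℝ}
    (hF : ∀ j ∈ s, Differentiable ℝ (F j)) (x y : E) :
    bregmanDiv (fun z => w * ∑ j ∈ s, F j z) x y = w * ∑ j ∈ s, bregmanDiv (F j) x y := by
  simp only [bregmanDiv, gradient_const_mul_fun_sum s w hF, real_inner_smul_left, sum_inner,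
    sum_sub_distrib]
  ring

theorem hasDerivAt_comp_add_smul {f : E → ℝ} (hf : Differentiable ℝ f) (a v : E) (t : ℝ) :
    HasDerivAt (fun s : ℝ => f (a + s • v)) ⟪gradient f (a + t • v), v⟫ t := by
  have hline : HasDerivAt (fun s : ℝ => a + s • v) v t := by
    simpa using ((hasDerivAt_id t).smul_const v).const_add a
  simpa [InnerProductSpace.toDual_apply_apply, Function.comp_def] using
    (hf (a + t • v)).hasGradientAt.hasFDerivAt.comp_hasDerivAt t hline

theorem ConvexOn.add_inner_gradient_le {f : E → ℝ} (hf : Differentiable ℝ f)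
    (hc : ConvexOn ℝ Set.univ f) (x y : E) : f y + ⟪gradient f y, x - y⟫ ≤ f x := by
  have hline : ConvexOn ℝ Set.univ (fun s : ℝ => f (y + s • (x - y))) := by
    have hcomp : (fun s : ℝ => f (y + s • (x - y))) = f ∘ AffineMap.lineMap y x := by
      funext s
      simp only [Function.comp_apply, AffineMap.lineMap_apply_module]
      congr 1
      module
    simpa only [hcomp, Set.preimage_univ] using hc.comp_affineMap (AffineMap.lineMap y x)
  have hd : HasDerivAt (fun s : ℝ => f (y + s • (x - y))) ⟪gradient f y, x - y⟫ 0 := by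
    simpa using hasDerivAt_comp_add_smul hf y (x - y) 0
  have hslope := hline.deriv_le_slope (Set.mem_univ 0) (Set.mem_univ 1) one_pos
    hd.differentiableAt
  simp only [hd.deriv, slope_def_field, zero_smul, add_zero, one_smul, sub_zero, div_one,
    add_sub_cancel] at hslope
  linarith

theorem le_add_inner_gradient_add_of_lipschitz_gradient {f : E → ℝ} {L : ℝ}
    (hf : Differentiable ℝ f) (hL : ∀ p q, ‖gradient f p - gradient f q‖ ≤ L * ‖p - q‖)
    (a b : E) : f b ≤ f a + ⟪gradient f a, b - a⟫ + L / 2 * ‖b - a‖ ^ 2 := by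
  have hline := hasDerivAt_comp_add_smul hf a (b - a)
  have hslope : ∀ t ∈ Set.Ioo (0 : ℝ) 1, ⟪gradient f (a + t • (b - a)), b - a⟫ ≤
      ⟪gradient f (a + (0 : ℝ) • (b - a)), b - a⟫ + L * ‖b - a‖ ^ 2 * t := by
    intro t ht
    calc ⟪gradient f (a + t • (b - a)), b - a⟫
        = ⟪gradient f a, b - a⟫ + ⟪gradient f (a + t • (b - a)) - gradient f a, b - a⟫ := by
          rw [inner_sub_left]; ring
      _ ≤ ⟪gradient f a, b - a⟫ + L * ‖t • (b - a)‖ * ‖b - a‖ := by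
          gcongr
          calc ⟪gradient f (a + t • (b - a)) - gradient f a, b - a⟫
              ≤ ‖gradient f (a + t • (b - a)) - gradient f a‖ * ‖b - a‖ := real_inner_le_norm _ _
            _ ≤ L * ‖t • (b - a)‖ * ‖b - a‖ := by
                gcongr; simpa using hL (a + t • (b - a)) a
      _ = _ := by
          rw [zero_smul, add_zero, norm_smul, Real.norm_of_nonneg ht.1.le]; ring
  have h := le_add_deriv_add_of_deriv_le_add_mul hline hslope
  simp only [one_smul, zero_smul, add_zero, add_sub_cancel] at h
  linarith

theorem ConvexOn.norm_gradient_sub_sq_le {f : E → ℝ} {L : ℝ} (hf : Differentiable ℝ f)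
    (hc : ConvexOn ℝ Set.univ f) (hL : ∀ p q, ‖gradient f p - gradient f q‖ ≤ L * ‖p - q‖)
    (x y : E) : ‖gradient f x - gradient f y‖ ^ 2 ≤ 2 * L * bregmanDiv f x y := by
  rcases eq_or_ne x y with rfl | hxy
  · simp [bregmanDiv]
  set g := gradient f x - gradient f y
  have hL0 : 0 ≤ L := nonneg_of_mul_nonneg_left ((norm_nonneg g).trans (hL x y))
    (norm_pos_iff.2 (sub_ne_zero.2 hxy))
  rcases hL0.eq_or_lt with rfl | hLpos
  · have hg0 : ‖g‖ = 0 := le_antisymm (by simpa using hL x y) (norm_nonneg g)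
    simp [hg0]
  set b := x - L⁻¹ • g
  have hdescent := le_add_inner_gradient_add_of_lipschitz_gradient hf hL x b
  have hfirst := hc.add_inner_gradient_le hf b y
  have hbx : b - x = -(L⁻¹ • g) := by simp [b]
  have hby : b - y = (x - y) - L⁻¹ • g := by simp only [b]; abel
  have hg : ⟪gradient f x, g⟫ - ⟪gradient f y, g⟫ = ‖g‖ ^ 2 := by
    rw [← inner_sub_left, real_inner_self_eq_norm_sq]
  rw [hbx, inner_neg_right, real_inner_smul_right, norm_neg, norm_smul, Real.norm_eq_abs,
    abs_of_pos (inv_pos.2 hLpos)] at hdescent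
  rw [hby, inner_sub_right, real_inner_smul_right] at hfirst
  have hDg : ‖g‖ ^ 2 / (2 * L) ≤ bregmanDiv f x y := by
    have hquad : L⁻¹ * ‖g‖ ^ 2 - L / 2 * (L⁻¹ * ‖g‖) ^ 2 = ‖g‖ ^ 2 / (2 * L) := by
      field_simp; ring
    rw [bregmanDiv, ← hquad, ← hg]
    linarith
  rwa [div_le_iff₀ (by positivity), mul_comm] at hDg

end

theorem stmt_5_general (d m : ℕ)
    (F : Fin m → EuclideanSpace ℝ (Fin d) → ℝ) (L : ℝ)
    (hdiff : ∀ j, Differentiable ℝ (F j))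
    (hconv : ∀ j, ConvexOn ℝ Set.univ (F j))
    (hL : ∀ j x y, ‖gradient (F j) x - gradient (F j) y‖ ≤ L * ‖x - y‖)
    (fi : EuclideanSpace ℝ (Fin d) → ℝ)
    (hfi : fi = fun x => (1 / (m : ℝ)) * ∑ j, F j x)
    (x xstar : EuclideanSpace ℝ (Fin d)) :
    (1 / (m : ℝ)) * ∑ j, ‖gradient (F j) x - gradient fi xstar‖ ^ 2 ≤
      4 * L * (fi x - fi xstar - ⟪gradient fi xstar, x - xstar⟫) +
        ((2 / (m : ℝ)) * ∑ j, ‖gradient (F j) xstar‖ ^ 2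
          - 2 * ‖gradient fi xstar‖ ^ 2) := by
  have hgrad : gradient fi xstar = (m : ℝ)⁻¹ • ∑ j, gradient (F j) xstar := by
    rw [hfi, gradient_const_mul_fun_sum _ _ (fun j _ => hdiff j), one_div]
  have hbregman : bregmanDiv fi x xstar = 1 / (m : ℝ) * ∑ j, bregmanDiv (F j) x xstar := by
    rw [hfi, bregmanDiv_const_mul_fun_sum _ _ (fun j _ => hdiff j)]
  have hvariance := Finset.inv_card_mul_sum_norm_sub_average_sq univ
    fun j => gradient (F j) xstar
  rw [card_univ, Fintype.card_fin, ← hgrad] at hvariance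
  have hpoint : ∀ j, ‖gradient (F j) x - gradient fi xstar‖ ^ 2 ≤
      4 * L * bregmanDiv (F j) x xstar + 2 * ‖gradient (F j) xstar - gradient fi xstar‖ ^ 2 := by
    intro j
    have hsplit := norm_add_sq_le_two_mul (gradient (F j) x - gradient (F j) xstar)
      (gradient (F j) xstar - gradient fi xstar)
    rw [sub_add_sub_cancel] at hsplit
    linarith [(hconv j).norm_gradient_sub_sq_le (hdiff j) (hL j) x xstar]
  calc (1 / (m : ℝ)) * ∑ j, ‖gradient (F j) x - gradient fi xstar‖ ^ 2
      ≤ (1 / (m : ℝ)) * ∑ j, (4 * L * bregmanDiv (F j) x xstar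
          + 2 * ‖gradient (F j) xstar - gradient fi xstar‖ ^ 2) := by
        gcongr with j; exact hpoint j
    _ = 4 * L * bregmanDiv fi x xstar + 2 * ((m : ℝ)⁻¹ *
          ∑ j, ‖gradient (F j) xstar - gradient fi xstar‖ ^ 2) := by
        rw [hbregman, sum_add_distrib, ← mul_sum, ← mul_sum, one_div]; ring
    _ = _ := by rw [hvariance, bregmanDiv]; ring

/-- Sampling: if `fᵢ = (1/m) Σⱼ f_{i,j}` with each `f_{i,j}` convex and `L`-smooth,
and `g = ∇f_{i,j}(x)` for `j` uniform, then
`E[‖g - ∇fᵢ(x⋆)‖²] ≤ 4 L D_{fᵢ}(x, x⋆) + C` with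
`C = (2/m) Σⱼ ‖∇f_{i,j}(x⋆)‖² - 2 ‖∇fᵢ(x⋆)‖²`. -/
theorem stmt_5 (d m : ℕ) (hm : 0 < m)
    (F : Fin m → EuclideanSpace ℝ (Fin d) → ℝ) (L : ℝ)
    (hdiff : ∀ j, Differentiable ℝ (F j))
    (hconv : ∀ j, ConvexOn ℝ Set.univ (F j))
    (hL : ∀ j x y, ‖gradient (F j) x - gradient (F j) y‖ ≤ L * ‖x - y‖)
    (fi : EuclideanSpace ℝ (Fin d) → ℝ)
    (hfi : fi = fun x => (1 / (m : ℝ)) * ∑ j, F j x)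
    (x xstar : EuclideanSpace ℝ (Fin d)) :
    (1 / (m : ℝ)) * ∑ j, ‖gradient (F j) x - gradient fi xstar‖ ^ 2 ≤
      4 * L * (fi x - fi xstar - ⟪gradient fi xstar, x - xstar⟫) +
        ((2 / (m : ℝ)) * ∑ j, ‖gradient (F j) xstar‖ ^ 2
          - 2 * ‖gradient fi xstar‖ ^ 2) :=
  stmt_5_general d m F L hdiff hconv hL fi hfi x xstar
end

section
/- For vectors w, w⋆, h, h⋆, x⋆ in an inner product space and x̂ := w + h, ĥ := h − pWx̂ where W is a self-adjoint idempotent linear operator with Wx⋆ = 0, Wh = h, Wh⋆ = h⋆, and p ∈ (0,1], the following identity holds: ‖x̂ − x⋆‖² = ‖w − w⋆‖² − ‖h − h⋆‖² + 2⟨x̂ − x⋆, ĥ − h⋆⟩ + 2p‖Wx̂‖², where w⋆ := x⋆ − h⋆. -/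
open RealInnerProductSpace

/-- For `x̂ = w + h`, `ĥ = h − p W x̂`, with `W` self-adjoint and idempotent,
`W x⋆ = 0`, `W h = h`, `W h⋆ = h⋆`, `p ∈ (0,1]`, `w⋆ = x⋆ − h⋆`:
`‖x̂ − x⋆‖² = ‖w − w⋆‖² − ‖h − h⋆‖² + 2⟨x̂ − x⋆, ĥ − h⋆⟩ + 2p‖W x̂‖²`. -/
theorem stmt_9 {E : Type*} [NormedAddCommGroup E] [InnerProductSpace ℝ E]
    (W : E →ₗ[ℝ] E)
    (hsa : ∀ u v : E, ⟪W u, v⟫ = ⟪u, W v⟫)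
    (hidem : ∀ u : E, W (W u) = W u)
    (p : ℝ) (hp : p ∈ Set.Ioc (0 : ℝ) 1)
    (w h hstar xstar wstar xhat hhat : E)
    (hWx : W xstar = 0) (hWh : W h = h) (hWhs : W hstar = hstar)
    (hws : wstar = xstar - hstar)
    (hxh : xhat = w + h) (hhh : hhat = h - p • W xhat) :
    ‖xhat - xstar‖ ^ 2 =
      ‖w - wstar‖ ^ 2 - ‖h - hstar‖ ^ 2 +
        2 * ⟪xhat - xstar, hhat - hstar⟫ + 2 * p * ‖W xhat‖ ^ 2 := by
  subst hws hxh hhh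
  have key : ⟪w + h - xstar, W (w + h)⟫ = ⟪W (w + h), W (w + h)⟫ := by
    rw [← hsa, map_sub, hWx, sub_zero, hsa, hsa, hidem]
  have e : ∀ u : E, ‖u‖ ^ 2 = ⟪u, u⟫ := fun u => (real_inner_self_eq_norm_sq u).symm
  rw [e, e, e, e]
  simp only [inner_sub_left, inner_sub_right, inner_add_left, inner_add_right,
    inner_smul_right] at *
  have c1 := real_inner_comm w h
  have c2 := real_inner_comm w xstar
  have c3 := real_inner_comm w hstar
  have c4 := real_inner_comm h xstar
  have c5 := real_inner_comm h hstar
  have c6 := real_inner_comm xstar hstar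
  have c7 := real_inner_comm w (W (w + h))
  have c8 := real_inner_comm h (W (w + h))
  have c9 := real_inner_comm xstar (W (w + h))
  simp only [c1, c2, c3, c4, c5, c6, c7, c8, c9]
  linear_combination 2 * p * key
end

section
/- Combining the two previous identities: with probability p set (x⁺, h⁺) = (Px̂, ĥ) and otherwise (x⁺, h⁺) = (x̂, h); then E[‖x⁺ − x⋆‖² + p^{-2}‖h⁺ − h⋆‖²] = ‖w − w⋆‖² + p^{-2}(1 − p²)‖h − h⋆‖², where P = Id − W and ‖Px̂ − x⋆‖² = ‖x̂ − x⋆‖² − ‖Wx̂‖². -/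
open RealInnerProductSpace

/-- Bernoulli(`p`) update: with probability `p` set `(x⁺,h⁺) = (P x̂, ĥ)` and
otherwise `(x⁺,h⁺) = (x̂, h)`; then
`E[‖x⁺ − x⋆‖² + p⁻²‖h⁺ − h⋆‖²] = ‖w − w⋆‖² + p⁻²(1 − p²)‖h − h⋆‖²`. -/
theorem stmt_11 {E : Type*} [NormedAddCommGroup E] [InnerProductSpace ℝ E]
    (W : E →ₗ[ℝ] E)
    (hsa : ∀ u v : E, ⟪W u, v⟫ = ⟪u, W v⟫)
    (hidem : ∀ u : E, W (W u) = W u)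
    (p : ℝ) (hp : p ∈ Set.Ioc (0 : ℝ) 1)
    (w h hstar xstar wstar xhat hhat : E)
    (hWx : W xstar = 0) (hWh : W h = h) (hWhs : W hstar = hstar)
    (hws : wstar = xstar - hstar)
    (hxh : xhat = w + h) (hhh : hhat = h - p • W xhat) :
    p * (‖(xhat - W xhat) - xstar‖ ^ 2 + p⁻¹ ^ 2 * ‖hhat - hstar‖ ^ 2) +
      (1 - p) * (‖xhat - xstar‖ ^ 2 + p⁻¹ ^ 2 * ‖h - hstar‖ ^ 2) =
    ‖w - wstar‖ ^ 2 + p⁻¹ ^ 2 * (1 - p ^ 2) * ‖h - hstar‖ ^ 2 := by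
  obtain ⟨hp0, _⟩ := hp
  have hpne : p ≠ 0 := ne_of_gt hp0
  subst hws hxh hhh
  set a := w + h - xstar with ha
  set q := W (w + h) with hq
  set d := h - hstar with hd
  have hWa : W a = q := by
    rw [ha, map_sub, hWx, sub_zero]
  have hWd : W d = d := by
    rw [hd, map_sub, hWh, hWhs]
  -- key inner product facts
  have h1 : ⟪a, q⟫ = ⟪q, q⟫ := by
    calc ⟪a, q⟫ = ⟪a, W q⟫ := by rw [hq, hidem]
    _ = ⟪W a, q⟫ := (hsa a q).symm
    _ = ⟪q, q⟫ := by rw [hWa]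
  have h2 : ⟪a, d⟫ = ⟪q, d⟫ := by
    calc ⟪a, d⟫ = ⟪a, W d⟫ := by rw [hWd]
    _ = ⟪W a, d⟫ := (hsa a d).symm
    _ = ⟪q, d⟫ := by rw [hWa]
  -- rewrite the vectors as differences of a, q, d
  have e1 : w + h - q - xstar = a - q := by rw [ha]; abel
  have e2 : h - p • q - hstar = d - p • q := by rw [hd]; abel
  have e3 : w - (xstar - hstar) = a - d := by rw [ha, hd]; abel
  rw [e1, e2, e3]
  have n1 : ‖a - q‖ ^ 2 = ‖a‖ ^ 2 - 2 * ⟪q, q⟫ + ‖q‖ ^ 2 := by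
    rw [norm_sub_sq_real, h1]
  have n2 : ‖d - p • q‖ ^ 2 = ‖d‖ ^ 2 - 2 * (p * ⟪q, d⟫) + p ^ 2 * ‖q‖ ^ 2 := by
    rw [norm_sub_sq_real, real_inner_smul_right, norm_smul, Real.norm_eq_abs,
      mul_pow, sq_abs, real_inner_comm]
  have n3 : ‖a - d‖ ^ 2 = ‖a‖ ^ 2 - 2 * ⟪q, d⟫ + ‖d‖ ^ 2 := by
    rw [norm_sub_sq_real, h2]
  have nq : ‖q‖ ^ 2 = ⟪q, q⟫ := (real_inner_self_eq_norm_sq q).symm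
  rw [n1, n2, n3, nq]
  field_simp
  ring
end
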